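/- Let γ : ℝ → ℝ be twice continuously differentiable with γ' and γ'' bounded. For θ ∈ ℝ let R(θ) be the 3×3 matrix of rotation about the x₃-axis, R(θ) = [[cos θ, −sin θ, 0], [sin θ, cos θ, 0], [0, 0, 1]]. For x = (x₁, x₂, x₃) ∈ ℝ³ define w(x) = γ'(x₃)(cos(γ(x₃)) x₁ + sin(γ(x₃)) x₂), let W(x) be the 3×3 matrix equal to the identity except that its (2,3) entry equals w(x), and set D(x) = R(γ(x₃)) W(x). Then det D(x) = 1 for every x ∈ ℝ³, and for every bounded set S ⊂ ℝ³ the matrix-valued map x ↦ D(x) is Lipschitz continuous on S. -/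

import Mathlib

/-!
`D(x) = R(γ(x₃)) W(x)` is a rotation times a unipotent shear, so `det D = 1`. Each entry of `D`
is `C¹` in `x` (the shear involves `γ'`, which is `C¹` since `γ` is `C²`), so `x ↦ D(x)`, viewed
as a map into operators on Euclidean space, is `C¹`. By the mean value inequality it is Lipschitz
on any closed ball, which is compact and convex, and hence on every bounded set.
-/

open Set

/-- Euclidean norm on `ℝ³` (realized as `Fin 3 → ℝ`). -/
noncomputable def enorm3 (x : Fin 3 → ℝ) : ℝ := Real.sqrt (∑ i, x i ^ 2)

/-- The (Euclidean) operator norm of a `3 × 3` real matrix. -/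
noncomputable def opNorm3 (A : Matrix (Fin 3) (Fin 3) ℝ) : ℝ :=
  ‖(Matrix.toEuclideanCLM (𝕜 := ℝ) A : EuclideanSpace ℝ (Fin 3) →L[ℝ] EuclideanSpace ℝ (Fin 3))‖

/-- Rotation about the `x₃`-axis by angle `θ`. -/
noncomputable def rotZ (θ : ℝ) : Matrix (Fin 3) (Fin 3) ℝ :=
  !![Real.cos θ, -Real.sin θ, 0; Real.sin θ, Real.cos θ, 0; 0, 0, 1]

/-- The shear function `w(x) = γ'(x₃)(cos(γ(x₃)) x₁ + sin(γ(x₃)) x₂)`. -/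
noncomputable def wFun (γ : ℝ → ℝ) (x : Fin 3 → ℝ) : ℝ :=
  deriv γ (x 2) * (Real.cos (γ (x 2)) * x 0 + Real.sin (γ (x 2)) * x 1)

/-- The matrix `W(x)`: the identity except that its `(2,3)` entry equals `w(x)`. -/
noncomputable def Wmat (γ : ℝ → ℝ) (x : Fin 3 → ℝ) : Matrix (Fin 3) (Fin 3) ℝ :=
  !![1, 0, 0; 0, 1, wFun γ x; 0, 0, 1]

/-- The transformation matrix `D(x) = R(γ(x₃)) W(x)` of the locally-periodic approximation. -/
noncomputable def Dmat (γ : ℝ → ℝ) (x : Fin 3 → ℝ) : Matrix (Fin 3) (Fin 3) ℝ :=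
  rotZ (γ (x 2)) * Wmat γ x

theorem ContDiff.exists_lipschitzOnWith_of_isBounded {E F : Type*}
    [NormedAddCommGroup E] [NormedSpace ℝ E] [ProperSpace E]
    [NormedAddCommGroup F] [NormedSpace ℝ F] {f : E → F} {n : WithTop ℕ∞}
    (hf : ContDiff ℝ n f) (hn : n ≠ 0) {S : Set E} (hS : Bornology.IsBounded S) :
    ∃ K, LipschitzOnWith K f S := by
  obtain ⟨r, hr⟩ := hS.subset_closedBall 0
  obtain ⟨K, hK⟩ := hf.contDiffOn.exists_lipschitzOnWith hn (convex_closedBall 0 r)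
    (isCompact_closedBall 0 r)
  exact ⟨K, hK.mono hr⟩

theorem Matrix.contDiff_toEuclideanCLM {𝕜 E ι : Type*} [RCLike 𝕜] [Fintype ι] [DecidableEq ι]
    [NormedAddCommGroup E] [NormedSpace 𝕜 E] {f : E → Matrix ι ι 𝕜} {n : WithTop ℕ∞}
    (hf : ∀ i j, ContDiff 𝕜 n fun x => f x i j) :
    ContDiff 𝕜 n fun x => Matrix.toEuclideanCLM (𝕜 := 𝕜) (f x) := by
  have hsum : ∀ x, Matrix.toEuclideanCLM (𝕜 := 𝕜) (f x) =
      ∑ i, ∑ j, f x i j • Matrix.toEuclideanCLM (𝕜 := 𝕜) (Matrix.single i j 1) := by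
    intro x
    conv_lhs => rw [Matrix.matrix_eq_sum_single (f x)]
    simp only [map_sum, ← map_smul, Matrix.smul_single, smul_eq_mul, mul_one]
  simp only [hsum]
  exact ContDiff.sum fun i _ => ContDiff.sum fun j _ => (hf i j).smul contDiff_const

theorem norm_le_enorm3 (v : Fin 3 → ℝ) : ‖v‖ ≤ enorm3 v := by
  have h : enorm3 v = ‖WithLp.toLp 2 v‖ := by
    simp [enorm3, EuclideanSpace.norm_eq]
  rw [h]
  exact pi_norm_le_iff_of_nonneg (norm_nonneg _) |>.mpr (PiLp.norm_apply_le (WithLp.toLp 2 v))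

theorem det_rotZ (θ : ℝ) : (rotZ θ).det = 1 := by
  rw [rotZ, Matrix.det_fin_three]
  simp [← sq]

theorem det_Wmat (γ : ℝ → ℝ) (x : Fin 3 → ℝ) : (Wmat γ x).det = 1 := by
  rw [Wmat, Matrix.det_fin_three]
  simp

theorem det_Dmat (γ : ℝ → ℝ) (x : Fin 3 → ℝ) : (Dmat γ x).det = 1 := by
  rw [Dmat, Matrix.det_mul, det_rotZ, det_Wmat, one_mul]

theorem contDiff_wFun {γ : ℝ → ℝ} (hγ : ContDiff ℝ 2 γ) : ContDiff ℝ 1 (wFun γ) := by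
  have hγ₁ : ContDiff ℝ 1 γ := hγ.of_le (by norm_num)
  have hγ' : ContDiff ℝ 1 (deriv γ) := hγ.deriv'
  unfold wFun
  fun_prop

theorem contDiff_Dmat_apply {γ : ℝ → ℝ} (hγ : ContDiff ℝ 2 γ) (i j : Fin 3) :
    ContDiff ℝ 1 fun x => Dmat γ x i j := by
  have hw := contDiff_wFun hγ
  have hγ₁ : ContDiff ℝ 1 γ := hγ.of_le (by norm_num)
  simp only [Dmat, Matrix.mul_apply, Fin.sum_univ_three]
  fin_cases i <;> fin_cases j <;> simp [rotZ, Wmat] <;> fun_prop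

theorem stmt_10_general (γ : ℝ → ℝ) (hγ : ContDiff ℝ 2 γ) :
    (∀ x : Fin 3 → ℝ, (Dmat γ x).det = 1) ∧
    (∀ S : Set (Fin 3 → ℝ), Bornology.IsBounded S →
      ∃ K : ℝ, ∀ x ∈ S, ∀ y ∈ S, opNorm3 (Dmat γ x - Dmat γ y) ≤ K * enorm3 (x - y)) := by
  refine ⟨det_Dmat γ, fun S hS => ?_⟩
  obtain ⟨K, hK⟩ := (Matrix.contDiff_toEuclideanCLM (contDiff_Dmat_apply hγ))
    |>.exists_lipschitzOnWith_of_isBounded one_ne_zero hS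
  refine ⟨K, fun x hx y hy => ?_⟩
  calc opNorm3 (Dmat γ x - Dmat γ y)
      = ‖Matrix.toEuclideanCLM (𝕜 := ℝ) (Dmat γ x) - Matrix.toEuclideanCLM (𝕜 := ℝ) (Dmat γ y)‖ := by
        rw [opNorm3, map_sub]
    _ ≤ K * ‖x - y‖ := hK.norm_sub_le hx hy
    _ ≤ K * enorm3 (x - y) := by gcongr; exact norm_le_enorm3 _

/-- `D(x) = R(γ(x₃)) W(x)` has determinant one and is Lipschitz continuous on every
bounded subset of `ℝ³`, provided `γ` is `C²` with bounded first and second derivatives. -/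
theorem stmt_10 (γ : ℝ → ℝ) (hγ : ContDiff ℝ 2 γ)
    (hγ' : ∃ Λ : ℝ, ∀ s : ℝ, |deriv γ s| ≤ Λ)
    (hγ'' : ∃ Λ : ℝ, ∀ s : ℝ, |deriv (deriv γ) s| ≤ Λ) :
    (∀ x : Fin 3 → ℝ, (Dmat γ x).det = 1) ∧
    (∀ S : Set (Fin 3 → ℝ), Bornology.IsBounded S →
      ∃ K : ℝ, ∀ x ∈ S, ∀ y ∈ S, opNorm3 (Dmat γ x - Dmat γ y) ≤ K * enorm3 (x - y)) :=
  stmt_10_general γ hγ
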